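/- Assume the KKT system has a solution (x̄,ȳ,z̄), let {(x^k,y^k,z^k)}_{k≥0} be an infinite sequence generated by the sPADMM, and assume Condition (C) holds. Then the sequence {x^k} converges to some x^∞ ∈ X that is an optimal solution of the dual problem (i.e. h(x^∞) ≥ h(x) for all x ∈ X), and f(y^k) + g(z^k) → f(ȳ) + g(z̄), the optimal value of the primal problem (P), as k → ∞. -/

import Mathlib

open scoped RealInnerProductSpace
open Filter Bornology

noncomputable section

variable {X Y Z : Type*}
variable [NormedAddCommGroup X] [InnerProductSpace ℝ X] [FiniteDimensional ℝ X]
variable [NormedAddCommGroup Y] [InnerProductSpace ℝ Y] [FiniteDimensional ℝ Y]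
variable [NormedAddCommGroup Z] [InnerProductSpace ℝ Z] [FiniteDimensional ℝ Z]

/-- `f : E → ℝ ∪ {+∞}` is proper, convex and lower semicontinuous. -/
def ProperConvexLsc {E : Type*} [NormedAddCommGroup E] [InnerProductSpace ℝ E]
    (f : E → EReal) : Prop :=
  (∃ u, f u ≠ ⊤) ∧ (∀ u, f u ≠ ⊥) ∧
    (∀ u v : E, ∀ a b : ℝ, 0 ≤ a → 0 ≤ b → a + b = 1 →
      f (a • u + b • v) ≤ (a : EReal) * f u + (b : EReal) * f v) ∧
    LowerSemicontinuous f

/-- `frec` is the recession function of `f`:  for any `u₀` in the effective domain of `f`,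
`frec u = lim_{ρ → +∞} (f (u₀ + ρ u) - f u₀) / ρ`. -/
def IsRecessionFn {E : Type*} [NormedAddCommGroup E] [InnerProductSpace ℝ E]
    (f : E → EReal) (frec : E → EReal) : Prop :=
  ∀ u₀ : E, f u₀ ≠ ⊤ → ∀ u : E,
    Tendsto (fun ρ : ℝ => (f (u₀ + ρ • u) - f u₀) * ((ρ⁻¹ : ℝ) : EReal))
      atTop (nhds (frec u))

/-- The augmented Lagrangian `L_σ(y, z; x)` of the problem
`min f(y) + g(z)  s.t.  A* y + B* z = c`. -/
def augL (f : Y → EReal) (g : Z → EReal) (A : X →ₗ[ℝ] Y) (B : X →ₗ[ℝ] Z)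
    (c : X) (σ : ℝ) (y : Y) (z : Z) (x : X) : EReal :=
  f y + g z + ((⟪x, (LinearMap.adjoint A) y + (LinearMap.adjoint B) z - c⟫ : ℝ) : EReal)
    + ((σ / 2 * ‖(LinearMap.adjoint A) y + (LinearMap.adjoint B) z - c‖ ^ 2 : ℝ) : EReal)

/-- Objective of the `y`-subproblem:  `F(w) = L_σ(w, z'; x') + (1/2) ‖w - y'‖_S²`. -/
def ysub (f : Y → EReal) (g : Z → EReal) (A : X →ₗ[ℝ] Y) (B : X →ₗ[ℝ] Z)
    (c : X) (σ : ℝ) (S : Y →ₗ[ℝ] Y) (x' : X) (y' : Y) (z' : Z) (w : Y) : EReal :=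
  augL f g A B c σ w z' x' + ((⟪w - y', S (w - y')⟫ / 2 : ℝ) : EReal)

/-- Objective of the `z`-subproblem:  `G(w) = L_σ(y', w; x') + (1/2) ‖w - z'‖_T²`. -/
def zsub (f : Y → EReal) (g : Z → EReal) (A : X →ₗ[ℝ] Y) (B : X →ₗ[ℝ] Z)
    (c : X) (σ : ℝ) (T : Z →ₗ[ℝ] Z) (x' : X) (y' : Y) (z' : Z) (w : Z) : EReal :=
  augL f g A B c σ y' w x' + ((⟪w - z', T (w - z')⟫ / 2 : ℝ) : EReal)

/-- The subdifferential `∂f(u)` of a function `f : E → ℝ ∪ {+∞}`. -/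
def subdiff {E : Type*} [NormedAddCommGroup E] [InnerProductSpace ℝ E]
    (f : E → EReal) (u : E) : Set E :=
  {v | ∀ w : E, f u + ((⟪v, w - u⟫ : ℝ) : EReal) ≤ f w}

/-- `(x, y, z) : ℕ → X × Y × Z` is a sequence generated by the sPADMM scheme with
penalty parameter `σ`, step-length `τ` and proximal terms given by `S` and `T`,
started from an initial point `(x⁰, y⁰, z⁰) ∈ X × dom f × dom g`. -/
def IsSPADMM (f : Y → EReal) (g : Z → EReal) (A : X →ₗ[ℝ] Y) (B : X →ₗ[ℝ] Z)
    (c : X) (σ τ : ℝ) (S : Y →ₗ[ℝ] Y) (T : Z →ₗ[ℝ] Z)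
    (x : ℕ → X) (y : ℕ → Y) (z : ℕ → Z) : Prop :=
  f (y 0) ≠ ⊤ ∧ g (z 0) ≠ ⊤ ∧
    (∀ k : ℕ, ∀ w : Y,
      ysub f g A B c σ S (x k) (y k) (z k) (y (k + 1))
        ≤ ysub f g A B c σ S (x k) (y k) (z k) w) ∧
    (∀ k : ℕ, ∀ w : Z,
      zsub f g A B c σ T (x k) (y (k + 1)) (z k) (z (k + 1))
        ≤ zsub f g A B c σ T (x k) (y (k + 1)) (z k) w) ∧
    (∀ k : ℕ, x (k + 1) = x k + (τ * σ) •
      ((LinearMap.adjoint A) (y (k + 1)) + (LinearMap.adjoint B) (z (k + 1)) - c))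

/-- `(x̄, ȳ, z̄)` solves the KKT system:
`-A x̄ ∈ ∂f(ȳ)`, `-B x̄ ∈ ∂g(z̄)` and `A* ȳ + B* z̄ = c`. -/
def IsKKT (f : Y → EReal) (g : Z → EReal) (A : X →ₗ[ℝ] Y) (B : X →ₗ[ℝ] Z)
    (c : X) (xb : X) (yb : Y) (zb : Z) : Prop :=
  -(A xb) ∈ subdiff f yb ∧ -(B xb) ∈ subdiff g zb ∧
    (LinearMap.adjoint A) yb + (LinearMap.adjoint B) zb = c

/-- Condition (C): either `0 < τ < (1+√5)/2`, or `τ ≥ (1+√5)/2` and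
`Σ_k ‖x^{k+1} - x^k‖² < ∞`. -/
def CondC {X : Type*} [NormedAddCommGroup X] (τ : ℝ) (x : ℕ → X) : Prop :=
  (0 < τ ∧ τ < (1 + Real.sqrt 5) / 2) ∨
    ((1 + Real.sqrt 5) / 2 ≤ τ ∧ Summable fun k : ℕ => ‖x (k + 1) - x k‖ ^ 2)

/-- `Sf` satisfies `⟨v - v', u - u'⟩ ≥ ‖u - u'‖²_{Sf}` for all `v ∈ ∂f(u)`, `v' ∈ ∂f(u')`. -/
def SubMono {E : Type*} [NormedAddCommGroup E] [InnerProductSpace ℝ E]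
    (f : E → EReal) (Sf : E →ₗ[ℝ] E) : Prop :=
  ∀ u u' v v' : E, v ∈ subdiff f u → v' ∈ subdiff f u' →
    ⟪u - u', Sf (u - u')⟫ ≤ ⟪v - v', u - u'⟫

/-- The dual objective function `h(x) = inf_{y, z} L(y, z; x)`, where
`L(y, z; x) = f(y) + g(z) + ⟨x, A*y + B*z - c⟩` is the ordinary Lagrangian. -/
def dualFn (f : Y → EReal) (g : Z → EReal) (A : X →ₗ[ℝ] Y) (B : X →ₗ[ℝ] Z) (c : X)
    (x : X) : EReal :=
  ⨅ y : Y, ⨅ z : Z,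
    (f y + g z + ((⟪x, (LinearMap.adjoint A) y + (LinearMap.adjoint B) z - c⟫ : ℝ) : EReal))

/-!
For a dual solution `x̂`, adding the subgradient inequalities of the two subproblems to those of
the KKT point shows that
`Φₖ = ‖xᵏ - x̂‖² + τσ (‖yᵏ - ȳ‖²_S + ‖zᵏ - z̄‖²_T + σ ‖B*(zᵏ - z̄)‖²)`
decreases by `τσ Wₖ`, where `Wₖ` controls the residual `rᵏ⁺¹ = A*yᵏ⁺¹ + B*zᵏ⁺¹ - c` and the
increments of `y` and `z`. For `τ` below the golden ratio the cross term
`⟪rᵏ⁺¹, B*(zᵏ⁺¹ - zᵏ)⟫` of `Wₖ` is paid for by the monotonicity of `∂g` between consecutive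
iterates; otherwise Condition (C) makes `‖rᵏ‖²` summable. Either way `Φₖ` converges and `Wₖ` is
summable.

Adding the subgradient inequalities against an arbitrary `(y, z)` instead gives
`f(yᵏ⁺¹) + g(zᵏ⁺¹) ≤ L(y, z; xᵏ) + o(1)`, so the objective values converge to `f(ȳ) + g(z̄)` and
every cluster point of `(xᵏ)` is a dual solution. As `Φₖ` converges for every dual solution, for two
cluster points `p, q` the sequence `⟪xᵏ, q - p⟫` converges, hence `⟪p, q - p⟫ = ⟪q, q - p⟫` and
`p = q` (Opial's argument).
-/

open Topology

local postfix:max "†" => LinearMap.adjoint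

theorem summable_and_exists_tendsto_of_quasiFejer {Φ w ε : ℕ → ℝ} (hΦ : ∀ k, 0 ≤ Φ k)
    (hw : ∀ k, 0 ≤ w k) (hε : Summable ε) (hrec : ∀ k, Φ (k + 1) + w k ≤ Φ k + ε k) :
    Summable w ∧ ∃ L, Tendsto Φ atTop (𝓝 L) := by
  set G : ℕ → ℝ := fun n => Φ n + ∑ i ∈ Finset.range n, w i - ∑ i ∈ Finset.range n, ε i
  have hG : Antitone G := antitone_nat_of_succ_le fun n => by
    simp only [G, Finset.sum_range_succ]
    linarith [hrec n]
  obtain ⟨M, hM⟩ := hε.hasSum.tendsto_sum_nat.bddAbove_range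
  have hεM : ∀ n, ∑ i ∈ Finset.range n, ε i ≤ M := fun n => hM ⟨n, rfl⟩
  have hGM : ∀ n, -M ≤ G n := fun n => by
    have := Finset.sum_nonneg fun i (_ : i ∈ Finset.range n) => hw i
    linarith [hΦ n, hεM n]
  have hwsum : Summable w := summable_of_sum_range_le (c := Φ 0 + M) hw fun n => by
    linarith [hG (Nat.zero_le n), hΦ n, hεM n, show G 0 = Φ 0 by simp [G]]
  obtain ⟨L, hL⟩ : ∃ L, Tendsto G atTop (𝓝 L) :=
    ⟨_, tendsto_atTop_ciInf hG ⟨-M, Set.forall_mem_range.2 hGM⟩⟩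
  refine ⟨hwsum, L - ∑' i, w i + ∑' i, ε i, ?_⟩
  refine ((hL.sub hwsum.hasSum.tendsto_sum_nat).add hε.hasSum.tendsto_sum_nat).congr fun n => ?_
  simp only [G]
  ring

theorem summable_of_le_mul_add {W R Bz Dy Dz : ℕ → ℝ} {a b : ℝ} (ha : 0 < a) (hb : 0 < b)
    (hR : ∀ k, 0 ≤ R k) (hBz : ∀ k, 0 ≤ Bz k) (hDy : ∀ k, 0 ≤ Dy k) (hDz : ∀ k, 0 ≤ Dz k)
    (hW : Summable W) (hle : ∀ k, a * R k + b * Bz k + Dy k + Dz k ≤ W k) :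
    Summable fun k => R k + Bz k + Dy k + Dz k := by
  set m := min (min a b) 1
  have hm : 0 < m := lt_min (lt_min ha hb) one_pos
  refine .of_nonneg_of_le (fun k => by linarith [hR k, hBz k, hDy k, hDz k])
    (fun k => ?_) (hW.div_const m)
  rw [le_div_iff₀ hm]
  have h1 := mul_le_mul_of_nonneg_right ((min_le_left (min a b) 1).trans (min_le_left a b)) (hR k)
  have h2 :=
    mul_le_mul_of_nonneg_right ((min_le_left (min a b) 1).trans (min_le_right a b)) (hBz k)
  have h3 := mul_le_mul_of_nonneg_right (min_le_right (min a b) 1) (hDy k)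
  have h4 := mul_le_mul_of_nonneg_right (min_le_right (min a b) 1) (hDz k)
  nlinarith [hle k]

theorem summable_and_exists_tendsto_of_lt_goldenRatio {σ τ : ℝ} (hσ : 0 < σ) (hτ : 0 < τ)
    (hτφ : τ < Real.goldenRatio) {Φ R Bz Dy Dz t s cr : ℕ → ℝ} (hΦ : ∀ k, 0 ≤ Φ k)
    (hR : ∀ k, 0 ≤ R k) (hBz : ∀ k, 0 ≤ Bz k) (hDy : ∀ k, 0 ≤ Dy k) (hDz : ∀ k, 0 ≤ Dz k)
    (hdesc : ∀ k, Φ (k + 1)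
      + τ * σ * ((2 - τ) * σ * R k - 2 * σ * t k + σ * Bz k + Dy k + Dz k) ≤ Φ k)
    (ht : ∀ k, σ * t (k + 1) ≤ (1 - τ) * σ * s k - Dz (k + 1) + cr k)
    (hs : ∀ k, s k ^ 2 ≤ R k * Bz (k + 1)) (hcr : ∀ k, 2 * cr k ≤ Dz k + Dz (k + 1)) :
    (Summable fun k => R k + Bz k + Dy k + Dz k) ∧ ∃ L, Tendsto Φ atTop (𝓝 L) := by
  -- `τ < φ` is `τ² - τ - 1 < 0`
  have hquad : (1 - τ) ^ 2 < 2 - τ := by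
    nlinarith [Real.goldenRatio_sq, Real.one_lt_goldenRatio]
  -- Young's inequality `2 (1 - τ) s ≤ p R + q Bz` with `p q = (1 - τ)²`, `p < 2 - τ`, `q < 1`
  obtain ⟨p, hp1, hp2⟩ : ∃ p, (1 - τ) ^ 2 < p ∧ p < 2 - τ :=
    ⟨(2 - τ + (1 - τ) ^ 2) / 2, by linarith, by linarith⟩
  have hp : 0 < p := lt_of_le_of_lt (sq_nonneg _) hp1
  set q := (1 - τ) ^ 2 / p
  have hq : q < 1 := by rw [div_lt_one hp]; exact hp1
  have hyoung : ∀ k, 2 * ((1 - τ) * s k) ≤ p * R k + q * Bz (k + 1) := fun k =>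
    two_mul_le_add_of_sq_le_mul (mul_nonneg hp.le (hR k))
      (mul_nonneg (div_nonneg (sq_nonneg _) hp.le) (hBz _)) <| calc
        ((1 - τ) * s k) ^ 2 ≤ (1 - τ) ^ 2 * (R k * Bz (k + 1)) := by
          rw [mul_pow]; exact mul_le_mul_of_nonneg_left (hs k) (sq_nonneg _)
        _ = p * R k * (q * Bz (k + 1)) := by simp only [q]; field_simp
  -- the extra terms of `Θ` pay for `t (k + 1)` through `ht` and Young's inequality
  set Θ : ℕ → ℝ := fun k => Φ (k + 1) + τ * σ * (p * σ * R k + Dz k)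
  set W : ℕ → ℝ := fun k => τ * σ * ((2 - τ - p) * σ * R (k + 1) + (1 - q) * σ * Bz (k + 1)
    + Dy (k + 1) + Dz (k + 1))
  have hτσ : 0 < τ * σ := mul_pos hτ hσ
  have hrec : ∀ k, Θ (k + 1) + W k ≤ Θ k + 0 := fun k => by
    have key : 2 * σ * t (k + 1) ≤ σ * (p * R k + q * Bz (k + 1)) + Dz k - Dz (k + 1) := by
      nlinarith [ht k, hcr k, mul_le_mul_of_nonneg_left (hyoung k) hσ.le]
    nlinarith [hdesc (k + 1), mul_le_mul_of_nonneg_left key hτσ.le]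
  have hWnonneg : ∀ k, 0 ≤ W k := fun k => by
    have : 0 ≤ (2 - τ - p) * σ * R (k + 1) := by
      have := hR (k + 1); have : 0 < 2 - τ - p := by linarith
      positivity
    have : 0 ≤ (1 - q) * σ * Bz (k + 1) := by
      have := hBz (k + 1); have : 0 < 1 - q := by linarith
      positivity
    have := hDy (k + 1); have := hDz (k + 1)
    positivity
  obtain ⟨hW, L, hΘ⟩ := summable_and_exists_tendsto_of_quasiFejer
    (fun k => by have := hΦ (k + 1); have := hR k; have := hDz k; positivity)
    hWnonneg summable_zero hrec
  have hsum : Summable fun k => R k + Bz k + Dy k + Dz k := by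
    refine (summable_nat_add_iff 1).mp (summable_of_le_mul_add (a := (2 - τ - p) * σ)
      (b := (1 - q) * σ) (mul_pos (by linarith) hσ) (mul_pos (by linarith) hσ)
      (fun k => hR (k + 1)) (fun k => hBz (k + 1)) (fun k => hDy (k + 1)) (fun k => hDz (k + 1))
      (hW.div_const (τ * σ)) fun k => ?_)
    rw [le_div_iff₀ hτσ]
    simp only [W]
    linarith
  refine ⟨hsum, L, (tendsto_add_atTop_iff_nat 1).mp ?_⟩
  have hRDz : Tendsto (fun k => τ * σ * (p * σ * R k + Dz k)) atTop (𝓝 0) := by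
    have hR0 := (hsum.of_nonneg_of_le (fun k => hR k) fun k => by
      linarith [hBz k, hDy k, hDz k]).tendsto_atTop_zero
    have hDz0 := (hsum.of_nonneg_of_le (fun k => hDz k) fun k => by
      linarith [hBz k, hDy k, hR k]).tendsto_atTop_zero
    simpa using ((hR0.const_mul (p * σ)).add hDz0).const_mul (τ * σ)
  simpa [Θ] using hΘ.sub hRDz

theorem summable_and_exists_tendsto_of_summable {σ τ : ℝ} (hσ : 0 < σ) (hτ : 0 < τ)
    {Φ R Bz Dy Dz t : ℕ → ℝ} (hΦ : ∀ k, 0 ≤ Φ k)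
    (hR : ∀ k, 0 ≤ R k) (hBz : ∀ k, 0 ≤ Bz k) (hDy : ∀ k, 0 ≤ Dy k) (hDz : ∀ k, 0 ≤ Dz k)
    (hdesc : ∀ k, Φ (k + 1)
      + τ * σ * ((2 - τ) * σ * R k - 2 * σ * t k + σ * Bz k + Dy k + Dz k) ≤ Φ k)
    (ht : ∀ k, t k ^ 2 ≤ R k * Bz k) (hRs : Summable R) :
    (Summable fun k => R k + Bz k + Dy k + Dz k) ∧ ∃ L, Tendsto Φ atTop (𝓝 L) := by
  have hτσ : 0 < τ * σ := mul_pos hτ hσ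
  have hyoung : ∀ k, 2 * t k ≤ 2 * R k + Bz k / 2 := fun k =>
    two_mul_le_add_of_sq_le_mul (by linarith [hR k]) (by linarith [hBz k])
      ((ht k).trans_eq (by ring))
  have hrec : ∀ k, Φ (k + 1) + τ * σ * (σ / 2 * Bz k + Dy k + Dz k) ≤ Φ k + (τ * σ) ^ 2 * R k :=
    fun k => by nlinarith [hdesc k, mul_le_mul_of_nonneg_left (hyoung k) (by positivity :
      (0 : ℝ) ≤ τ * σ * σ)]
  obtain ⟨hW, hΦL⟩ := summable_and_exists_tendsto_of_quasiFejer hΦ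
    (fun k => by have := hBz k; have := hDy k; have := hDz k; positivity) (hRs.mul_left _) hrec
  refine ⟨summable_of_le_mul_add one_pos (half_pos hσ) hR hBz hDy hDz
    (hRs.add (hW.div_const (τ * σ))) fun k => ?_, hΦL⟩
  rw [mul_div_cancel_left₀ _ hτσ.ne']
  linarith

theorem tendsto_zero_of_tendsto_norm_sq {E : Type*} [NormedAddCommGroup E] {u : ℕ → E}
    (h : Tendsto (fun k => ‖u k‖ ^ 2) atTop (𝓝 0)) : Tendsto u atTop (𝓝 0) :=
  tendsto_zero_iff_norm_tendsto_zero.2 (by simpa using h.sqrt)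

section InnerProductSpace

variable {E : Type*} [NormedAddCommGroup E] [InnerProductSpace ℝ E]

theorem sq_real_inner_le_norm_sq_mul_norm_sq (u v : E) : ⟪u, v⟫ ^ 2 ≤ ‖u‖ ^ 2 * ‖v‖ ^ 2 := by
  rw [sq, ← real_inner_self_eq_norm_sq, ← real_inner_self_eq_norm_sq]
  exact real_inner_mul_inner_self_le u v

theorem sq_inner_map_le_of_nonneg {S : E →ₗ[ℝ] E} (hS : S.IsSymmetric)
    (hSpsd : ∀ w, 0 ≤ ⟪w, S w⟫) (u v : E) : ⟪u, S v⟫ ^ 2 ≤ ⟪u, S u⟫ * ⟪v, S v⟫ := by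
  have hquad : ∀ t : ℝ, 0 ≤ ⟪v, S v⟫ * (t * t) + 2 * ⟪u, S v⟫ * t + ⟪u, S u⟫ := fun t => by
    have hvu : ⟪v, S u⟫ = ⟪u, S v⟫ := by rw [real_inner_comm, hS]
    convert hSpsd (u + t • v) using 1
    simp only [map_add, map_smul, inner_add_left, inner_add_right, real_inner_smul_left,
      real_inner_smul_right, hvu]
    ring
  have := discrim_le_zero hquad
  rw [discrim] at this
  linarith

theorem tendsto_inner_map_zero_of_nonneg {S : E →ₗ[ℝ] E} (hS : S.IsSymmetric)
    (hSpsd : ∀ w, 0 ≤ ⟪w, S w⟫) {u : ℕ → E}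
    (hu : Tendsto (fun k => ⟪u k, S (u k)⟫) atTop (𝓝 0)) (v : E) :
    Tendsto (fun k => ⟪S (u k), v⟫) atTop (𝓝 0) := by
  refine squeeze_zero_norm (a := fun k => √(⟪u k, S (u k)⟫ * ⟪v, S v⟫)) (fun k => ?_) ?_
  · rw [Real.norm_eq_abs, hS]
    exact Real.abs_le_sqrt (sq_inner_map_le_of_nonneg hS hSpsd _ _)
  · simpa using (hu.mul_const ⟪v, S v⟫).sqrt

theorem exists_mem_tendsto_of_tendsto_norm_sub_sq_add [ProperSpace E] {u : ℕ → E} {c : ℕ → ℝ}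
    (hc : ∀ k, 0 ≤ c k) {P : Set E} (hP : P.Nonempty)
    (hconv : ∀ p ∈ P, ∃ L, Tendsto (fun k => ‖u k - p‖ ^ 2 + c k) atTop (𝓝 L))
    (hclus : ∀ p, MapClusterPt p atTop u → p ∈ P) : ∃ p ∈ P, Tendsto u atTop (𝓝 p) := by
  obtain ⟨p₀, hp₀⟩ := hP
  obtain ⟨L₀, hL₀⟩ := hconv p₀ hp₀
  obtain ⟨M, hM⟩ := hL₀.bddAbove_range
  set K := Metric.closedBall p₀ √M
  have hK : IsCompact K := isCompact_closedBall _ _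
  have huK : ∀ k, u k ∈ K := fun k => by
    rw [Metric.mem_closedBall, dist_eq_norm]
    exact Real.le_sqrt_of_sq_le (by linarith [hM ⟨k, rfl⟩, hc k])
  obtain ⟨p, -, hp⟩ := hK.exists_mapClusterPt (f := atTop) (tendsto_principal.2 (.of_forall huK))
  refine ⟨p, hclus p hp, hK.tendsto_nhds_of_unique_mapClusterPt (.of_forall huK) ?_⟩
  intro q _ hq
  obtain ⟨Lp, hLp⟩ := hconv p (hclus p hp)
  obtain ⟨Lq, hLq⟩ := hconv q (hclus q hq)
  -- `⟪u k, q - p⟫` converges, so it takes the same value at the cluster points `p` and `q`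
  set μ := (Lp - Lq - (‖p‖ ^ 2 - ‖q‖ ^ 2)) / 2
  have hlim : Tendsto (fun k => ⟪u k, q - p⟫) atTop (𝓝 μ) := by
    refine (((hLp.sub hLq).sub_const (‖p‖ ^ 2 - ‖q‖ ^ 2)).div_const 2).congr fun k => ?_
    rw [norm_sub_sq_real, norm_sub_sq_real, inner_sub_right]
    ring
  have hval : ∀ w, MapClusterPt w atTop u → ⟪w, q - p⟫ = μ := fun w hw => by
    have h : MapClusterPt ⟪w, q - p⟫ atTop fun k => ⟪u k, q - p⟫ :=
      hw.continuousAt_comp (f := fun v => ⟪v, q - p⟫) (by fun_prop)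
    exact eq_of_nhds_neBot (h.clusterPt.mono hlim).neBot
  have : ‖q - p‖ ^ 2 = 0 := by
    rw [← real_inner_self_eq_norm_sq, inner_sub_left, hval q hq, hval p hp, sub_self]
  simpa [sub_eq_zero] using this

end InnerProductSpace

section Subdifferential

variable {E : Type*} [NormedAddCommGroup E] [InnerProductSpace ℝ E] {f : E → EReal} {u v w : E}

theorem ne_top_of_mem_subdiff (hf : ∃ w, f w ≠ ⊤) (h : v ∈ subdiff f u) : f u ≠ ⊤ := by
  obtain ⟨w, hw⟩ := hf
  intro hu
  have := h w
  rw [hu, EReal.top_add_of_ne_bot (EReal.coe_ne_bot _), top_le_iff] at this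
  exact hw this

theorem toReal_add_inner_le_of_mem_subdiff (hbot : ∀ u, f u ≠ ⊥) (h : v ∈ subdiff f u)
    (hu : f u ≠ ⊤) (hw : f w ≠ ⊤) : (f u).toReal + ⟪v, w - u⟫ ≤ (f w).toReal := by
  have := h w
  rwa [← EReal.coe_toReal hu (hbot u), ← EReal.coe_toReal hw (hbot w), ← EReal.coe_add,
    EReal.coe_le_coe_iff] at this

theorem inner_sub_nonneg_of_mem_subdiff (hf : ∃ w, f w ≠ ⊤) (hbot : ∀ u, f u ≠ ⊥) {u' v' : E}
    (h : v ∈ subdiff f u) (h' : v' ∈ subdiff f u') : 0 ≤ ⟪v - v', u - u'⟫ := by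
  have hu := ne_top_of_mem_subdiff hf h
  have hu' := ne_top_of_mem_subdiff hf h'
  have h₁ := toReal_add_inner_le_of_mem_subdiff hbot h hu hu'
  have h₂ := toReal_add_inner_le_of_mem_subdiff hbot h' hu' hu
  rw [← neg_sub u u', inner_neg_right] at h₁
  rw [inner_sub_left]
  linarith

theorem neg_mem_subdiff_of_forall_add_le
    (hconv : ∀ u v : E, ∀ a b : ℝ, 0 ≤ a → 0 ≤ b → a + b = 1 →
      f (a • u + b • v) ≤ (a : EReal) * f u + (b : EReal) * f v)
    (hbot : ∀ u, f u ≠ ⊥) (hu : f u ≠ ⊤) {q Q : E → ℝ} {g : E}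
    (hq : ∀ d : E, ∀ t : ℝ, q (u + t • d) = q u + t * ⟪g, d⟫ + t ^ 2 * Q d)
    (hmin : ∀ w, f u + (q u : EReal) ≤ f w + (q w : EReal)) : -g ∈ subdiff f u := by
  intro w
  rcases eq_or_ne (f w) ⊤ with hw | hw
  · simp [hw]
  obtain ⟨a, ha⟩ : ∃ a : ℝ, f u = a := ⟨_, (EReal.coe_toReal hu (hbot u)).symm⟩
  obtain ⟨b, hb⟩ : ∃ b : ℝ, f w = b := ⟨_, (EReal.coe_toReal hw (hbot w)).symm⟩
  set d := w - u
  have key : ∀ t ∈ Set.Ioo (0 : ℝ) 1, a ≤ b + ⟪g, d⟫ + t * Q d := by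
    rintro t ⟨ht₀, ht₁⟩
    have hcv := hconv u w (1 - t) t (by linarith) ht₀.le (by ring)
    rw [show (1 - t) • u + t • w = u + t • d by simp only [d, smul_sub, sub_smul, one_smul]; abel,
      ha, hb, ← EReal.coe_mul, ← EReal.coe_mul, ← EReal.coe_add] at hcv
    have hm := (hmin (u + t • d)).trans (add_le_add hcv le_rfl)
    rw [ha, ← EReal.coe_add, ← EReal.coe_add, EReal.coe_le_coe_iff, hq] at hm
    nlinarith
  have hlim : Tendsto (fun t => b + ⟪g, d⟫ + t * Q d) (𝓝[>] 0) (𝓝 (b + ⟪g, d⟫ + 0 * Q d)) :=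
    ((Continuous.tendsto (by fun_prop) 0).mono_left nhdsWithin_le_nhds)
  have := ge_of_tendsto hlim (Filter.mem_of_superset (Ioo_mem_nhdsGT one_pos) key)
  rw [ha, hb, ← EReal.coe_add, EReal.coe_le_coe_iff, inner_neg_left]
  linarith

end Subdifferential

theorem neg_mem_subdiff_of_forall_le_augmented {E F : Type*} [NormedAddCommGroup E]
    [InnerProductSpace ℝ E] [FiniteDimensional ℝ E] [NormedAddCommGroup F]
    [InnerProductSpace ℝ F] [FiniteDimensional ℝ F] {f : F → EReal}
    (hconv : ∀ u v : F, ∀ a b : ℝ, 0 ≤ a → 0 ≤ b → a + b = 1 →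
      f (a • u + b • v) ≤ (a : EReal) * f u + (b : EReal) * f v)
    (hbot : ∀ u, f u ≠ ⊥) {M : E →ₗ[ℝ] F} {S : F →ₗ[ℝ] F} (hS : S.IsSymmetric) {σ γ : ℝ}
    {x m : E} {w₀ u : F} (hu : f u ≠ ⊤)
    (hmin : ∀ w, f u + ((γ + ⟪x, M† u + m⟫ + σ / 2 * ‖M† u + m‖ ^ 2
        + ⟪u - w₀, S (u - w₀)⟫ / 2 : ℝ) : EReal)
      ≤ f w + ((γ + ⟪x, M† w + m⟫ + σ / 2 * ‖M† w + m‖ ^ 2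
        + ⟪w - w₀, S (w - w₀)⟫ / 2 : ℝ) : EReal)) :
    -(M (x + σ • (M† u + m)) + S (u - w₀)) ∈ subdiff f u := by
  refine neg_mem_subdiff_of_forall_add_le hconv hbot hu
    (q := fun w => γ + ⟪x, M† w + m⟫ + σ / 2 * ‖M† w + m‖ ^ 2 + ⟪w - w₀, S (w - w₀)⟫ / 2)
    (Q := fun d => σ / 2 * ‖M† d‖ ^ 2 + ⟪d, S d⟫ / 2) (fun d t => ?_) hmin
  have hS' : ⟪d, S (u - w₀)⟫ = ⟪S (u - w₀), d⟫ := by rw [real_inner_comm]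
  rw [show u + t • d - w₀ = u - w₀ + t • d by abel, map_add, map_smul,
    show M† u + t • M† d + m = (M† u + m) + t • M† d by abel]
  simp only [map_add, map_smul, inner_add_left, inner_add_right, real_inner_smul_left,
    real_inner_smul_right, norm_add_sq_real, norm_smul, Real.norm_eq_abs, mul_pow, sq_abs,
    LinearMap.adjoint_inner_right, hS _ d, hS']
  ring

def primalResidual (A : X →ₗ[ℝ] Y) (B : X →ₗ[ℝ] Z) (c : X) (y : Y) (z : Z) : X := A† y + B† z - c

def primalDist (B : X →ₗ[ℝ] Z) (σ : ℝ) (S : Y →ₗ[ℝ] Y) (T : Z →ₗ[ℝ] Z) (yb : Y) (zb : Z)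
    (y : Y) (z : Z) : ℝ :=
  ⟪y - yb, S (y - yb)⟫ + ⟪z - zb, T (z - zb)⟫ + σ * ‖B† (z - zb)‖ ^ 2

section SPADMM

variable {f : Y → EReal} {g : Z → EReal} {A : X →ₗ[ℝ] Y} {B : X →ₗ[ℝ] Z} {c : X} {σ τ : ℝ}
  {S : Y →ₗ[ℝ] Y} {T : Z →ₗ[ℝ] Z} {x : ℕ → X} {y : ℕ → Y} {z : ℕ → Z}
  {xb : X} {yb : Y} {zb : Z}

theorem ysub_eq_add {x' : X} {y' : Y} {z' : Z} {γ : ℝ} (hz' : g z' = γ) (w : Y) :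
    ysub f g A B c σ S x' y' z' w = f w + ((γ + ⟪x', A† w + (B† z' - c)⟫
      + σ / 2 * ‖A† w + (B† z' - c)‖ ^ 2 + ⟪w - y', S (w - y')⟫ / 2 : ℝ) : EReal) := by
  simp only [ysub, augL, hz', add_sub_assoc, EReal.coe_add]
  abel

theorem zsub_eq_add {x' : X} {y' : Y} {z' : Z} {γ : ℝ} (hy' : f y' = γ) (w : Z) :
    zsub f g A B c σ T x' y' z' w = g w + ((γ + ⟪x', B† w + (A† y' - c)⟫
      + σ / 2 * ‖B† w + (A† y' - c)‖ ^ 2 + ⟪w - z', T (w - z')⟫ / 2 : ℝ) : EReal) := by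
  simp only [zsub, augL, hy', show A† y' + B† w - c = B† w + (A† y' - c) by abel, EReal.coe_add]
  abel

theorem IsSPADMM.ne_top (hseq : IsSPADMM f g A B c σ τ S T x y z) (hf : ∀ u, f u ≠ ⊥)
    (hg : ∀ u, g u ≠ ⊥) (k : ℕ) : f (y k) ≠ ⊤ ∧ g (z k) ≠ ⊤ := by
  induction k with
  | zero => exact ⟨hseq.1, hseq.2.1⟩
  | succ k ih =>
    obtain ⟨α, hα⟩ : ∃ α : ℝ, f (y k) = α := ⟨_, (EReal.coe_toReal ih.1 (hf _)).symm⟩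
    obtain ⟨γ, hγ⟩ : ∃ γ : ℝ, g (z k) = γ := ⟨_, (EReal.coe_toReal ih.2 (hg _)).symm⟩
    -- the new iterate does no worse than the previous one in each subproblem
    have hy : f (y (k + 1)) ≠ ⊤ := fun h => by
      have := hseq.2.2.1 k (y k)
      rw [ysub_eq_add hγ, ysub_eq_add hγ, h, hα, EReal.top_add_of_ne_bot (EReal.coe_ne_bot _),
        ← EReal.coe_add, top_le_iff] at this
      exact EReal.coe_ne_top _ this
    obtain ⟨β, hβ⟩ : ∃ β : ℝ, f (y (k + 1)) = β := ⟨_, (EReal.coe_toReal hy (hf _)).symm⟩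
    refine ⟨hy, fun h => ?_⟩
    have := hseq.2.2.2.1 k (z k)
    rw [zsub_eq_add hβ, zsub_eq_add hβ, h, hγ, EReal.top_add_of_ne_bot (EReal.coe_ne_bot _),
      ← EReal.coe_add, top_le_iff] at this
    exact EReal.coe_ne_top _ this

theorem IsSPADMM.neg_mem_subdiff_left (hseq : IsSPADMM f g A B c σ τ S T x y z)
    (hf : ProperConvexLsc f) (hg : ∀ u, g u ≠ ⊥) (hS : S.IsSymmetric) (k : ℕ) :
    -(A (x k + σ • primalResidual A B c (y (k + 1)) (z k)) + S (y (k + 1) - y k))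
      ∈ subdiff f (y (k + 1)) := by
  obtain ⟨γ, hγ⟩ : ∃ γ : ℝ, g (z k) = γ :=
    ⟨_, (EReal.coe_toReal (hseq.ne_top hf.2.1 hg k).2 (hg _)).symm⟩
  have := neg_mem_subdiff_of_forall_le_augmented hf.2.2.1 hf.2.1 hS
    (hseq.ne_top hf.2.1 hg (k + 1)).1 fun w => by
      simpa only [ysub_eq_add hγ] using hseq.2.2.1 k w
  simpa only [primalResidual, add_sub_assoc] using this

theorem IsSPADMM.neg_mem_subdiff_right (hseq : IsSPADMM f g A B c σ τ S T x y z)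
    (hf : ∀ u, f u ≠ ⊥) (hg : ProperConvexLsc g) (hT : T.IsSymmetric) (k : ℕ) :
    -(B (x k + σ • primalResidual A B c (y (k + 1)) (z (k + 1))) + T (z (k + 1) - z k))
      ∈ subdiff g (z (k + 1)) := by
  obtain ⟨β, hβ⟩ : ∃ β : ℝ, f (y (k + 1)) = β :=
    ⟨_, (EReal.coe_toReal (hseq.ne_top hf hg.2.1 (k + 1)).1 (hf _)).symm⟩
  have := neg_mem_subdiff_of_forall_le_augmented hg.2.2.1 hg.2.1 hT
    (hseq.ne_top hf hg.2.1 (k + 1)).2 fun w => by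
      simpa only [zsub_eq_add hβ] using hseq.2.2.2.1 k w
  rwa [show B† (z (k + 1)) + (A† (y (k + 1)) - c)
      = primalResidual A B c (y (k + 1)) (z (k + 1)) by simp only [primalResidual]; abel] at this

theorem IsSPADMM.objective_add_inner_le (hseq : IsSPADMM f g A B c σ τ S T x y z)
    (hf : ProperConvexLsc f) (hg : ProperConvexLsc g) (hS : S.IsSymmetric) (hT : T.IsSymmetric)
    (k : ℕ) {y' : Y} {z' : Z} (hy' : f y' ≠ ⊤) (hz' : g z' ≠ ⊤) :
    (f (y (k + 1))).toReal + (g (z (k + 1))).toReal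
      + ⟪x k + σ • primalResidual A B c (y (k + 1)) (z (k + 1)),
          primalResidual A B c (y (k + 1)) (z (k + 1)) - primalResidual A B c y' z'⟫
      + σ * ⟪B† (z (k + 1) - z k), A† (y' - y (k + 1))⟫
    ≤ (f y').toReal + (g z').toReal + ⟪S (y (k + 1) - y k), y' - y (k + 1)⟫
      + ⟪T (z (k + 1) - z k), z' - z (k + 1)⟫ := by
  have hfin := hseq.ne_top hf.2.1 hg.2.1 (k + 1)
  have h₁ := toReal_add_inner_le_of_mem_subdiff hf.2.1
    (hseq.neg_mem_subdiff_left hf hg.2.1 hS k) hfin.1 hy'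
  have h₂ := toReal_add_inner_le_of_mem_subdiff hg.2.1
    (hseq.neg_mem_subdiff_right hf.2.1 hg hT k) hfin.2 hz'
  rw [show primalResidual A B c (y (k + 1)) (z k)
      = primalResidual A B c (y (k + 1)) (z (k + 1)) - B† (z (k + 1) - z k) by
    simp only [primalResidual, map_sub]; abel] at h₁
  rw [show primalResidual A B c (y (k + 1)) (z (k + 1)) - primalResidual A B c y' z'
      = -(A† (y' - y (k + 1)) + B† (z' - z (k + 1))) by
    simp only [primalResidual, map_sub]; abel]
  simp only [inner_neg_left, inner_add_left, inner_sub_left, real_inner_smul_left,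
    ← LinearMap.adjoint_inner_right A, ← LinearMap.adjoint_inner_right B, inner_neg_right,
    inner_add_right] at h₁ h₂ ⊢
  linarith

theorem IsSPADMM.inner_primalResidual_le (hseq : IsSPADMM f g A B c σ τ S T x y z)
    (hf : ∀ u, f u ≠ ⊥) (hg : ProperConvexLsc g) (hT : T.IsSymmetric) (k : ℕ) :
    σ * ⟪primalResidual A B c (y (k + 2)) (z (k + 2)), B† (z (k + 2) - z (k + 1))⟫
      ≤ (1 - τ) * σ * ⟪primalResidual A B c (y (k + 1)) (z (k + 1)), B† (z (k + 2) - z (k + 1))⟫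
        - ⟪z (k + 2) - z (k + 1), T (z (k + 2) - z (k + 1))⟫
        + ⟪T (z (k + 1) - z k), z (k + 2) - z (k + 1)⟫ := by
  have h := inner_sub_nonneg_of_mem_subdiff hg.1 hg.2.1
    (hseq.neg_mem_subdiff_right hf hg hT (k + 1)) (hseq.neg_mem_subdiff_right hf hg hT k)
  rw [hseq.2.2.2.2 k] at h
  rw [real_inner_comm (T _)]
  simp only [primalResidual, show k + 1 + 1 = k + 2 from rfl] at h ⊢
  simp only [inner_neg_left, inner_add_left, inner_sub_left, real_inner_smul_left,
    ← LinearMap.adjoint_inner_right B, map_add, map_smul] at h ⊢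
  linarith

theorem dualFn_le_of_feasible (h : A† yb + B† zb = c) (w : X) :
    dualFn f g A B c w ≤ f yb + g zb := by
  have : dualFn f g A B c w ≤ f yb + g zb + ((⟪w, A† yb + B† zb - c⟫ : ℝ) : EReal) :=
    (iInf_le _ yb).trans (iInf_le _ zb)
  simpa [h] using this

theorem add_le_dualFn_iff (hf : ∀ u, f u ≠ ⊥) (hg : ∀ u, g u ≠ ⊥)
    (hyb : f yb ≠ ⊤) (hzb : g zb ≠ ⊤) {w : X} :
    f yb + g zb ≤ dualFn f g A B c w ↔ ∀ y' z', f y' ≠ ⊤ → g z' ≠ ⊤ →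
      (f yb).toReal + (g zb).toReal ≤ (f y').toReal + (g z').toReal + ⟪w, A† y' + B† z' - c⟫ := by
  rw [← EReal.coe_toReal hyb (hf _), ← EReal.coe_toReal hzb (hg _), ← EReal.coe_add]
  simp only [dualFn, le_iInf_iff, EReal.toReal_coe]
  refine forall₂_congr fun y' z' => ?_
  rcases eq_or_ne (f y') ⊤ with hy' | hy'
  · simp [hy', EReal.top_add_of_ne_bot (hg z')]
  rcases eq_or_ne (g z') ⊤ with hz' | hz'
  · simp [hz', EReal.add_top_of_ne_bot (hf y')]
  rw [← EReal.coe_toReal hy' (hf _), ← EReal.coe_toReal hz' (hg _)]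
  simp only [ne_eq, EReal.coe_ne_top, not_false_eq_true, forall_const, EReal.toReal_coe]
  norm_cast

theorem IsKKT.add_le_dualFn (hf : ProperConvexLsc f) (hg : ProperConvexLsc g)
    (h : IsKKT f g A B c xb yb zb) : f yb + g zb ≤ dualFn f g A B c xb := by
  obtain ⟨hAxb, hBxb, hfeas⟩ := h
  have hyb := ne_top_of_mem_subdiff hf.1 hAxb
  have hzb := ne_top_of_mem_subdiff hg.1 hBxb
  refine (add_le_dualFn_iff hf.2.1 hg.2.1 hyb hzb).2 fun y' z' hy' hz' => ?_
  have h₁ := toReal_add_inner_le_of_mem_subdiff hf.2.1 hAxb hyb hy'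
  have h₂ := toReal_add_inner_le_of_mem_subdiff hg.2.1 hBxb hzb hz'
  rw [← hfeas, show A† y' + B† z' - (A† yb + B† zb) = A† (y' - yb) + B† (z' - zb) by
    simp only [map_sub]; abel, inner_add_right, LinearMap.adjoint_inner_right,
    LinearMap.adjoint_inner_right]
  rw [inner_neg_left] at h₁ h₂
  linarith

theorem IsSPADMM.fejer_identity (hseq : IsSPADMM f g A B c σ τ S T x y z) (hS : S.IsSymmetric)
    (hT : T.IsSymmetric) (hfeas : A† yb + B† zb = c) (xh : X) (k : ℕ) :
    ‖x (k + 1) - xh‖ ^ 2 + τ * σ * primalDist B σ S T yb zb (y (k + 1)) (z (k + 1))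
      + τ * σ * ((2 - τ) * σ * ‖primalResidual A B c (y (k + 1)) (z (k + 1))‖ ^ 2
        - 2 * σ * ⟪primalResidual A B c (y (k + 1)) (z (k + 1)), B† (z (k + 1) - z k)⟫
        + σ * ‖B† (z (k + 1) - z k)‖ ^ 2 + ⟪y (k + 1) - y k, S (y (k + 1) - y k)⟫
        + ⟪z (k + 1) - z k, T (z (k + 1) - z k)⟫)
    = ‖x k - xh‖ ^ 2 + τ * σ * primalDist B σ S T yb zb (y k) (z k)
      + 2 * τ * σ * (⟪x k + σ • primalResidual A B c (y (k + 1)) (z (k + 1)) - xh,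
          primalResidual A B c (y (k + 1)) (z (k + 1))⟫
        + σ * ⟪B† (z (k + 1) - z k), A† (yb - y (k + 1))⟫
        + ⟪S (y (k + 1) - y k), y (k + 1) - yb⟫ + ⟪T (z (k + 1) - z k), z (k + 1) - zb⟫) := by
  have hr : primalResidual A B c (y (k + 1)) (z (k + 1))
      = A† (y (k + 1) - yb) + B† (z (k + 1) - zb) := by
    simp only [primalResidual, map_sub, ← hfeas]; abel
  have hx : x (k + 1) - xh
      = x k - xh + (τ * σ) • primalResidual A B c (y (k + 1)) (z (k + 1)) := by
    rw [hseq.2.2.2.2 k]; simp only [primalResidual]; abel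
  rw [hx, show x k + σ • primalResidual A B c (y (k + 1)) (z (k + 1)) - xh
      = x k - xh + σ • primalResidual A B c (y (k + 1)) (z (k + 1)) by abel, hr,
    show y (k + 1) - y k = (y (k + 1) - yb) - (y k - yb) by abel,
    show z (k + 1) - z k = (z (k + 1) - zb) - (z k - zb) by abel,
    show yb - y (k + 1) = -(y (k + 1) - yb) by abel]
  simp only [primalDist]
  generalize x k - xh = u
  generalize y (k + 1) - yb = v
  generalize y k - yb = v'
  generalize z (k + 1) - zb = w
  generalize z k - zb = w'
  have hSv : ⟪v', S v⟫ = ⟪v, S v'⟫ := by rw [← hS, real_inner_comm]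
  have hTw : ⟪w', T w⟫ = ⟪w, T w'⟫ := by rw [← hT, real_inner_comm]
  simp only [← real_inner_self_eq_norm_sq, map_sub, map_neg, inner_add_left, inner_add_right,
    inner_sub_left, inner_sub_right, inner_neg_right, real_inner_smul_left, real_inner_smul_right,
    hS _ v, hT _ w, hSv, hTw, real_inner_comm u (A† v), real_inner_comm u (B† w),
    real_inner_comm (A† v) (B† w), real_inner_comm (A† v) (B† w'), real_inner_comm (B† w) (B† w')]
  ring

theorem IsSPADMM.gap_nonpos (hseq : IsSPADMM f g A B c σ τ S T x y z) (hf : ProperConvexLsc f)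
    (hg : ProperConvexLsc g) (hS : S.IsSymmetric) (hT : T.IsSymmetric)
    (hkkt : IsKKT f g A B c xb yb zb) {xh : X} (hxh : f yb + g zb ≤ dualFn f g A B c xh)
    (k : ℕ) :
    ⟪x k + σ • primalResidual A B c (y (k + 1)) (z (k + 1)) - xh,
        primalResidual A B c (y (k + 1)) (z (k + 1))⟫
      + σ * ⟪B† (z (k + 1) - z k), A† (yb - y (k + 1))⟫
      + ⟪S (y (k + 1) - y k), y (k + 1) - yb⟫ + ⟪T (z (k + 1) - z k), z (k + 1) - zb⟫ ≤ 0 := by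
  have hyb := ne_top_of_mem_subdiff hf.1 hkkt.1
  have hzb := ne_top_of_mem_subdiff hg.1 hkkt.2.1
  have hfin := hseq.ne_top hf.2.1 hg.2.1 (k + 1)
  have hL := hseq.objective_add_inner_le hf hg hS hT k hyb hzb
  have hD := (add_le_dualFn_iff hf.2.1 hg.2.1 hyb hzb).1 hxh _ _ hfin.1 hfin.2
  rw [show primalResidual A B c yb zb = 0 by simp [primalResidual, hkkt.2.2], sub_zero] at hL
  rw [show y (k + 1) - yb = -(yb - y (k + 1)) by abel,
    show z (k + 1) - zb = -(zb - z (k + 1)) by abel, inner_neg_right, inner_neg_right,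
    inner_sub_left]
  change _ ≤ _ + _ + ⟪xh, primalResidual A B c (y (k + 1)) (z (k + 1))⟫ at hD
  linarith

theorem IsSPADMM.summable_and_exists_tendsto (hseq : IsSPADMM f g A B c σ τ S T x y z)
    (hf : ProperConvexLsc f) (hg : ProperConvexLsc g) (hσ : 0 < σ) (hτ : 0 < τ)
    (hS : S.IsSymmetric) (hSpsd : ∀ w, 0 ≤ ⟪w, S w⟫) (hT : T.IsSymmetric)
    (hTpsd : ∀ w, 0 ≤ ⟪w, T w⟫) (hkkt : IsKKT f g A B c xb yb zb) (hC : CondC τ x) {xh : X}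
    (hxh : f yb + g zb ≤ dualFn f g A B c xh) :
    (Summable fun k => ‖primalResidual A B c (y (k + 1)) (z (k + 1))‖ ^ 2
      + ‖B† (z (k + 1) - z k)‖ ^ 2 + ⟪y (k + 1) - y k, S (y (k + 1) - y k)⟫
      + ⟪z (k + 1) - z k, T (z (k + 1) - z k)⟫) ∧
    ∃ L, Tendsto (fun k => ‖x k - xh‖ ^ 2 + τ * σ * primalDist B σ S T yb zb (y k) (z k))
      atTop (𝓝 L) := by
  have hdesc : ∀ k, ‖x (k + 1) - xh‖ ^ 2
      + τ * σ * primalDist B σ S T yb zb (y (k + 1)) (z (k + 1))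
      + τ * σ * ((2 - τ) * σ * ‖primalResidual A B c (y (k + 1)) (z (k + 1))‖ ^ 2
        - 2 * σ * ⟪primalResidual A B c (y (k + 1)) (z (k + 1)), B† (z (k + 1) - z k)⟫
        + σ * ‖B† (z (k + 1) - z k)‖ ^ 2 + ⟪y (k + 1) - y k, S (y (k + 1) - y k)⟫
        + ⟪z (k + 1) - z k, T (z (k + 1) - z k)⟫)
      ≤ ‖x k - xh‖ ^ 2 + τ * σ * primalDist B σ S T yb zb (y k) (z k) := fun k => by
    rw [hseq.fejer_identity hS hT hkkt.2.2 xh k]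
    have := hseq.gap_nonpos hf hg hS hT hkkt hxh k
    have : 0 < τ * σ := mul_pos hτ hσ
    nlinarith
  have hΦ : ∀ k, 0 ≤ ‖x k - xh‖ ^ 2 + τ * σ * primalDist B σ S T yb zb (y k) (z k) := fun k => by
    have := hSpsd (y k - yb); have := hTpsd (z k - zb)
    unfold primalDist; positivity
  rcases hC with ⟨-, hτφ⟩ | ⟨-, hsum⟩
  · refine summable_and_exists_tendsto_of_lt_goldenRatio hσ hτ hτφ hΦ (fun _ => sq_nonneg _)
      (fun _ => sq_nonneg _) (fun _ => hSpsd _) (fun _ => hTpsd _) hdesc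
      (hseq.inner_primalResidual_le hf.2.1 hg hT)
      (fun _ => sq_real_inner_le_norm_sq_mul_norm_sq _ _)
      fun _ => two_mul_le_add_of_sq_le_mul (hTpsd _) (hTpsd _) ?_
    rw [hT]
    exact sq_inner_map_le_of_nonneg hT hTpsd _ _
  · have hR : Summable fun k => ‖primalResidual A B c (y (k + 1)) (z (k + 1))‖ ^ 2 := by
      refine (summable_mul_left_iff (pow_ne_zero 2 (mul_pos hτ hσ).ne')).1 (hsum.congr fun k => ?_)
      rw [hseq.2.2.2.2 k, add_sub_cancel_left, norm_smul, mul_pow, Real.norm_eq_abs, sq_abs,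
        primalResidual]
    exact summable_and_exists_tendsto_of_summable hσ hτ hΦ (fun _ => sq_nonneg _)
      (fun _ => sq_nonneg _) (fun _ => hSpsd _) (fun _ => hTpsd _) hdesc
      (fun _ => sq_real_inner_le_norm_sq_mul_norm_sq _ _) hR

theorem IsSPADMM.tendsto_increments (hseq : IsSPADMM f g A B c σ τ S T x y z)
    (hf : ProperConvexLsc f) (hg : ProperConvexLsc g) (hσ : 0 < σ) (hτ : 0 < τ)
    (hS : S.IsSymmetric) (hSpsd : ∀ w, 0 ≤ ⟪w, S w⟫) (hT : T.IsSymmetric)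
    (hTpsd : ∀ w, 0 ≤ ⟪w, T w⟫) (hkkt : IsKKT f g A B c xb yb zb) (hC : CondC τ x) :
    Tendsto (fun k => primalResidual A B c (y (k + 1)) (z (k + 1))) atTop (𝓝 0) ∧
    Tendsto (fun k => B† (z (k + 1) - z k)) atTop (𝓝 0) ∧
    Tendsto (fun k => ⟪y (k + 1) - y k, S (y (k + 1) - y k)⟫) atTop (𝓝 0) ∧
    Tendsto (fun k => ⟪z (k + 1) - z k, T (z (k + 1) - z k)⟫) atTop (𝓝 0) := by
  have hsum := (hseq.summable_and_exists_tendsto hf hg hσ hτ hS hSpsd hT hTpsd hkkt hC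
    (hkkt.add_le_dualFn hf hg)).1.tendsto_atTop_zero
  have hR := fun k => sq_nonneg ‖primalResidual A B c (y (k + 1)) (z (k + 1))‖
  have hBz := fun k => sq_nonneg ‖B† (z (k + 1) - z k)‖
  have hDy := fun k => hSpsd (y (k + 1) - y k)
  have hDz := fun k => hTpsd (z (k + 1) - z k)
  refine ⟨tendsto_zero_of_tendsto_norm_sq (squeeze_zero hR (fun k => ?_) hsum),
    tendsto_zero_of_tendsto_norm_sq (squeeze_zero hBz (fun k => ?_) hsum),
    squeeze_zero hDy (fun k => ?_) hsum, squeeze_zero hDz (fun k => ?_) hsum⟩ <;>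
  linarith [hR k, hBz k, hDy k, hDz k]

theorem IsSPADMM.tendsto_gap (hseq : IsSPADMM f g A B c σ τ S T x y z)
    (hf : ProperConvexLsc f) (hg : ProperConvexLsc g) (hσ : 0 < σ) (hτ : 0 < τ)
    (hS : S.IsSymmetric) (hSpsd : ∀ w, 0 ≤ ⟪w, S w⟫) (hT : T.IsSymmetric)
    (hTpsd : ∀ w, 0 ≤ ⟪w, T w⟫) (hkkt : IsKKT f g A B c xb yb zb) (hC : CondC τ x) :
    Tendsto (fun k => ⟪x k + σ • primalResidual A B c (y (k + 1)) (z (k + 1)) - xb,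
        primalResidual A B c (y (k + 1)) (z (k + 1))⟫
      + σ * ⟪B† (z (k + 1) - z k), A† (yb - y (k + 1))⟫
      + ⟪S (y (k + 1) - y k), y (k + 1) - yb⟫ + ⟪T (z (k + 1) - z k), z (k + 1) - zb⟫)
      atTop (𝓝 0) := by
  obtain ⟨-, L, hL⟩ := hseq.summable_and_exists_tendsto hf hg hσ hτ hS hSpsd hT hTpsd hkkt hC
    (hkkt.add_le_dualFn hf hg)
  obtain ⟨hr, hd, hDy, hDz⟩ := hseq.tendsto_increments hf hg hσ hτ hS hSpsd hT hTpsd hkkt hC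
  have hΦ := (hL.comp (tendsto_add_atTop_nat 1)).sub hL
  have hW : Tendsto (fun k => (2 - τ) * σ * ‖primalResidual A B c (y (k + 1)) (z (k + 1))‖ ^ 2
      - 2 * σ * ⟪primalResidual A B c (y (k + 1)) (z (k + 1)), B† (z (k + 1) - z k)⟫
      + σ * ‖B† (z (k + 1) - z k)‖ ^ 2 + ⟪y (k + 1) - y k, S (y (k + 1) - y k)⟫
      + ⟪z (k + 1) - z k, T (z (k + 1) - z k)⟫) atTop (𝓝 0) := by
    simpa using (((((hr.norm.pow 2).const_mul ((2 - τ) * σ)).sub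
      ((hr.inner hd).const_mul (2 * σ))).add ((hd.norm.pow 2).const_mul σ)).add hDy).add hDz
  -- by the Fejér identity, the gap is the decrease of the Lyapunov function plus `τσ W`
  have hlim := ((hΦ.add (hW.const_mul (τ * σ))).div_const (2 * τ * σ))
  rw [sub_self, mul_zero, add_zero, zero_div] at hlim
  refine hlim.congr fun k => ?_
  have := hseq.fejer_identity hS hT hkkt.2.2 xb k
  have : τ * σ ≠ 0 := (mul_pos hτ hσ).ne'
  simp only [Function.comp]
  field_simp
  linarith

theorem IsSPADMM.exists_tendsto_zero_objective_le (hseq : IsSPADMM f g A B c σ τ S T x y z)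
    (hf : ProperConvexLsc f) (hg : ProperConvexLsc g) (hσ : 0 < σ) (hτ : 0 < τ)
    (hS : S.IsSymmetric) (hSpsd : ∀ w, 0 ≤ ⟪w, S w⟫) (hT : T.IsSymmetric)
    (hTpsd : ∀ w, 0 ≤ ⟪w, T w⟫) (hkkt : IsKKT f g A B c xb yb zb) (hC : CondC τ x) {y' : Y}
    {z' : Z} (hy' : f y' ≠ ⊤) (hz' : g z' ≠ ⊤) :
    ∃ e : ℕ → ℝ, Tendsto e atTop (𝓝 0) ∧ ∀ k, (f (y (k + 1))).toReal + (g (z (k + 1))).toReal + e k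
      ≤ (f y').toReal + (g z').toReal + ⟪x k, primalResidual A B c y' z'⟫ := by
  obtain ⟨hr, hd, hDy, hDz⟩ := hseq.tendsto_increments hf hg hσ hτ hS hSpsd hT hTpsd hkkt hC
  have hG := hseq.tendsto_gap hf hg hσ hτ hS hSpsd hT hTpsd hkkt hC
  -- the gap at `(x̄, ȳ, z̄)` plus terms that are linear in the vanishing increments
  refine ⟨fun k => (⟪x k + σ • primalResidual A B c (y (k + 1)) (z (k + 1)) - xb,
        primalResidual A B c (y (k + 1)) (z (k + 1))⟫
      + σ * ⟪B† (z (k + 1) - z k), A† (yb - y (k + 1))⟫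
      + ⟪S (y (k + 1) - y k), y (k + 1) - yb⟫ + ⟪T (z (k + 1) - z k), z (k + 1) - zb⟫)
      + ⟪xb - σ • primalResidual A B c y' z', primalResidual A B c (y (k + 1)) (z (k + 1))⟫
      + σ * ⟪B† (z (k + 1) - z k), A† (y' - yb)⟫
      - ⟪S (y (k + 1) - y k), y' - yb⟫ - ⟪T (z (k + 1) - z k), z' - zb⟫, ?_, fun k => ?_⟩
  · simpa using (((hG.add (tendsto_const_nhds.inner hr)).add
      ((hd.inner tendsto_const_nhds).const_mul σ)).sub
      (tendsto_inner_map_zero_of_nonneg hS hSpsd hDy (y' - yb))).sub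
      (tendsto_inner_map_zero_of_nonneg hT hTpsd hDz (z' - zb))
  have hL := hseq.objective_add_inner_le hf hg hS hT k hy' hz'
  simp only [map_sub, inner_add_left, inner_add_right, inner_sub_left, inner_sub_right,
    real_inner_smul_left, real_inner_smul_right, real_inner_comm (primalResidual A B c y' z')]
    at hL ⊢
  linarith

theorem IsSPADMM.tendsto_toReal_objective (hseq : IsSPADMM f g A B c σ τ S T x y z)
    (hf : ProperConvexLsc f) (hg : ProperConvexLsc g) (hσ : 0 < σ) (hτ : 0 < τ)
    (hS : S.IsSymmetric) (hSpsd : ∀ w, 0 ≤ ⟪w, S w⟫) (hT : T.IsSymmetric)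
    (hTpsd : ∀ w, 0 ≤ ⟪w, T w⟫) (hkkt : IsKKT f g A B c xb yb zb) (hC : CondC τ x) :
    Tendsto (fun k => (f (y k)).toReal + (g (z k)).toReal) atTop
      (𝓝 ((f yb).toReal + (g zb).toReal)) := by
  have hyb := ne_top_of_mem_subdiff hf.1 hkkt.1
  have hzb := ne_top_of_mem_subdiff hg.1 hkkt.2.1
  obtain ⟨e, he, hup⟩ := hseq.exists_tendsto_zero_objective_le hf hg hσ hτ hS hSpsd hT hTpsd hkkt hC
    hyb hzb
  simp only [show primalResidual A B c yb zb = 0 by simp [primalResidual, hkkt.2.2],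
    inner_zero_right, add_zero] at hup
  have hr := (hseq.tendsto_increments hf hg hσ hτ hS hSpsd hT hTpsd hkkt hC).1
  simp only [primalResidual] at hr
  have hlow := (add_le_dualFn_iff hf.2.1 hg.2.1 hyb hzb).1 (hkkt.add_le_dualFn hf hg)
  refine (tendsto_add_atTop_iff_nat 1).mp (tendsto_of_tendsto_of_tendsto_of_le_of_le
    (by simpa using
      ((tendsto_const_nhds (x := xb)).inner hr).const_sub ((f yb).toReal + (g zb).toReal))
    (by simpa using he.const_sub ((f yb).toReal + (g zb).toReal)) (fun k => ?_) fun k => ?_)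
  · have := hseq.ne_top hf.2.1 hg.2.1 (k + 1)
    linarith [hlow _ _ this.1 this.2]
  · linarith [hup k]

theorem IsSPADMM.add_le_dualFn_of_mapClusterPt (hseq : IsSPADMM f g A B c σ τ S T x y z)
    (hf : ProperConvexLsc f) (hg : ProperConvexLsc g) (hσ : 0 < σ) (hτ : 0 < τ)
    (hS : S.IsSymmetric) (hSpsd : ∀ w, 0 ≤ ⟪w, S w⟫) (hT : T.IsSymmetric)
    (hTpsd : ∀ w, 0 ≤ ⟪w, T w⟫) (hkkt : IsKKT f g A B c xb yb zb) (hC : CondC τ x) {p : X}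
    (hp : MapClusterPt p atTop x) : f yb + g zb ≤ dualFn f g A B c p := by
  refine (add_le_dualFn_iff hf.2.1 hg.2.1 (ne_top_of_mem_subdiff hf.1 hkkt.1)
    (ne_top_of_mem_subdiff hg.1 hkkt.2.1)).2 fun y' z' hy' hz' => ?_
  obtain ⟨e, he, hle⟩ := hseq.exists_tendsto_zero_objective_le hf hg hσ hτ hS hSpsd hT hTpsd hkkt
    hC hy' hz'
  obtain ⟨φ, hφ, hxφ⟩ := hp.tendsto_subseq
  have hobj := (hseq.tendsto_toReal_objective hf hg hσ hτ hS hSpsd hT hTpsd hkkt hC).comp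
    ((tendsto_add_atTop_nat 1).comp hφ.tendsto_atTop)
  exact le_of_tendsto_of_tendsto' (by simpa using hobj.add (he.comp hφ.tendsto_atTop))
    (tendsto_const_nhds.add (hxφ.inner tendsto_const_nhds)) fun j => hle (φ j)

end SPADMM

/-- **Theorem 1(a).**  If the KKT system has a solution `(x̄, ȳ, z̄)` and Condition (C)
holds, then `{x^k}` converges to an optimal solution of the dual problem, and the primal
objective values `f(y^k) + g(z^k)` converge to the optimal value `f(ȳ) + g(z̄)`. -/
theorem stmt_16
    (f : Y → EReal) (g : Z → EReal)
    (hf : ProperConvexLsc f) (hg : ProperConvexLsc g)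
    (A : X →ₗ[ℝ] Y) (B : X →ₗ[ℝ] Z) (c : X)
    (σ τ : ℝ) (hσ : 0 < σ) (hτ : 0 < τ)
    (S : Y →ₗ[ℝ] Y) (hSsym : S.IsSymmetric) (hSpsd : ∀ w : Y, 0 ≤ ⟪w, S w⟫)
    (T : Z →ₗ[ℝ] Z) (hTsym : T.IsSymmetric) (hTpsd : ∀ w : Z, 0 ≤ ⟪w, T w⟫)
    (xb : X) (yb : Y) (zb : Z) (hkkt : IsKKT f g A B c xb yb zb)
    (x : ℕ → X) (y : ℕ → Y) (z : ℕ → Z)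
    (hseq : IsSPADMM f g A B c σ τ S T x y z)
    (hC : CondC τ x) :
    (∃ xinf : X, Tendsto x atTop (nhds xinf) ∧
      ∀ w : X, dualFn f g A B c w ≤ dualFn f g A B c xinf) ∧
    Tendsto (fun k : ℕ => f (y k) + g (z k)) atTop (nhds (f yb + g zb)) := by
  obtain ⟨xinf, hxinf, hlim⟩ := exists_mem_tendsto_of_tendsto_norm_sub_sq_add
    (c := fun k => τ * σ * primalDist B σ S T yb zb (y k) (z k))
    (fun k => by have := hSpsd (y k - yb); have := hTpsd (z k - zb); unfold primalDist; positivity)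
    ⟨xb, hkkt.add_le_dualFn hf hg⟩
    (fun _ hp =>
      (hseq.summable_and_exists_tendsto hf hg hσ hτ hSsym hSpsd hTsym hTpsd hkkt hC hp).2)
    fun _ hp => hseq.add_le_dualFn_of_mapClusterPt hf hg hσ hτ hSsym hSpsd hTsym hTpsd hkkt hC hp
  refine ⟨⟨xinf, hlim, fun w => (dualFn_le_of_feasible hkkt.2.2 w).trans hxinf⟩, ?_⟩
  have hcoe {u : Y} {v : Z} (hu : f u ≠ ⊤) (hv : g v ≠ ⊤) :
      f u + g v = (((f u).toReal + (g v).toReal : ℝ) : EReal) := by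
    rw [EReal.coe_add, EReal.coe_toReal hu (hf.2.1 u), EReal.coe_toReal hv (hg.2.1 v)]
  simp only [hcoe (hseq.ne_top hf.2.1 hg.2.1 _).1 (hseq.ne_top hf.2.1 hg.2.1 _).2,
    hcoe (ne_top_of_mem_subdiff hf.1 hkkt.1) (ne_top_of_mem_subdiff hg.1 hkkt.2.1)]
  exact EReal.tendsto_coe.2
    (hseq.tendsto_toReal_objective hf hg hσ hτ hSsym hSpsd hTsym hTpsd hkkt hC)
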